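/- Let Ω be a locally compact Hausdorff space and Γ a nondegenerate Banach module over C₀(Ω). If f, g ∈ C₀(Ω) satisfy |g(x)| ≤ |f(x)| for every x ∈ Ω, then ‖g•s‖ ≤ ‖f•s‖ for every s ∈ Γ. -/

import Mathlib

open scoped ZeroAtInfty

noncomputable section

variable {𝕜 : Type*} [RCLike 𝕜] {Ω : Type*} [TopologicalSpace Ω]

/-- A Banach module structure over `C₀(Ω, 𝕜)` on a `𝕜`-Banach space `Γ`. -/
structure C0Module (𝕜 : Type*) [RCLike 𝕜] (Ω : Type*) [TopologicalSpace Ω]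
    (Γ : Type*) [NormedAddCommGroup Γ] [NormedSpace 𝕜 Γ] where
  smul : C₀(Ω, 𝕜) →L[𝕜] Γ →L[𝕜] Γ
  mul_smul : ∀ (f g : C₀(Ω, 𝕜)) (s : Γ), smul (f * g) s = smul f (smul g s)
  norm_smul_le : ∀ (f : C₀(Ω, 𝕜)) (s : Γ), ‖smul f s‖ ≤ ‖f‖ * ‖s‖

variable {Γ : Type*} [NormedAddCommGroup Γ] [NormedSpace 𝕜 Γ]

/-- Nondegeneracy of a Banach module over `C₀(Ω, 𝕜)`. -/
def C0Module.Nondegenerate (M : C0Module 𝕜 Ω Γ) : Prop :=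
  Dense (Submodule.span 𝕜 {x : Γ | ∃ (f : C₀(Ω, 𝕜)) (s : Γ), M.smul f s = x} : Set Γ)

/-- Elementary real inequality: if `0 ≤ a ≤ b` and `δ > 0` then
`a * δ / (b ^ 2 + δ) ≤ √δ / 2`. -/
lemma aux_ineq (a b δ : ℝ) (ha : 0 ≤ a) (hab : a ≤ b) (hδ : 0 < δ) :
    a * δ / (b ^ 2 + δ) ≤ Real.sqrt δ / 2 := by
  have hd : 0 < b ^ 2 + δ := by positivity
  rw [div_le_div_iff₀ hd (by norm_num)]
  have h1 : Real.sqrt δ ^ 2 = δ := Real.sq_sqrt hδ.le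
  have h2 : 0 ≤ Real.sqrt δ := Real.sqrt_nonneg δ
  nlinarith [sq_nonneg (b - Real.sqrt δ), sq_nonneg b]

/-- Pointwise algebraic identity used in the approximation argument. -/
lemma aux_id (z w : 𝕜) (δ : ℝ) (hδ : 0 < δ) :
    w * (starRingEnd 𝕜) z / ((‖z‖ ^ 2 + δ : ℝ) : 𝕜) * z - w
      = -(w * ((δ : ℝ) : 𝕜) / ((‖z‖ ^ 2 + δ : ℝ) : 𝕜)) := by
  have hd0 : ((‖z‖ ^ 2 + δ : ℝ) : 𝕜) ≠ 0 := RCLike.ofReal_ne_zero.mpr (by positivity)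
  have hz : (starRingEnd 𝕜) z * z = ((‖z‖ ^ 2 : ℝ) : 𝕜) := by exact_mod_cast RCLike.conj_mul z
  rw [div_mul_eq_mul_div, mul_assoc, hz]
  rw [div_sub' hd0, neg_div', div_eq_div_iff hd0 hd0]
  push_cast
  ring

/-- In a nondegenerate Banach module over `C₀(Ω)`, a pointwise domination
`|g| ≤ |f|` of functions implies the norm estimate `‖g • s‖ ≤ ‖f • s‖` for all `s`. -/
theorem norm_smul_le_of_abs_le
    [LocallyCompactSpace Ω] [T2Space Ω] [CompleteSpace Γ]
    (M : C0Module 𝕜 Ω Γ) (hM : M.Nondegenerate)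
    (f g : C₀(Ω, 𝕜)) (hfg : ∀ x : Ω, ‖g x‖ ≤ ‖f x‖) (s : Γ) :
    ‖M.smul g s‖ ≤ ‖M.smul f s‖ := by
  refine le_of_forall_pos_le_add fun ε hε => ?_
  have hs1 : (0:ℝ) < ‖s‖ + 1 := by positivity
  set c : ℝ := ε / (‖s‖ + 1) with hc
  have hcpos : 0 < c := div_pos hε hs1
  set δ : ℝ := c ^ 2 with hδdef
  have hδ : 0 < δ := by positivity
  -- the auxiliary function h with ‖h‖ ≤ 1 and h * f close to g
  have hcont : Continuous fun x : Ω =>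
      g x * (starRingEnd 𝕜) (f x) / ((‖f x‖ ^ 2 + δ : ℝ) : 𝕜) := by
    apply Continuous.div
    · exact (map_continuous g).mul ((map_continuous f).star)
    · exact RCLike.continuous_ofReal.comp (((map_continuous f).norm.pow 2).add continuous_const)
    · intro x
      exact RCLike.ofReal_ne_zero.mpr (by positivity)
  have hzero : Filter.Tendsto
      (fun x : Ω => g x * (starRingEnd 𝕜) (f x) / ((‖f x‖ ^ 2 + δ : ℝ) : 𝕜))
      (Filter.cocompact Ω) (nhds 0) := by
    rw [tendsto_zero_iff_norm_tendsto_zero]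
    apply squeeze_zero (g := fun x => ‖g x‖ * ‖f x‖ / δ) (fun x => norm_nonneg _)
    · intro x
      have hd : (0:ℝ) < ‖f x‖ ^ 2 + δ := by positivity
      rw [norm_div, norm_mul, RCLike.norm_conj, RCLike.norm_ofReal, abs_of_pos hd]
      apply div_le_div₀ (by positivity) le_rfl hδ
      · nlinarith [norm_nonneg (f x)]
    · have h1 : Filter.Tendsto (fun x => ‖g x‖ * ‖f x‖) (Filter.cocompact Ω) (nhds 0) := by
        simpa using (zero_at_infty g).norm.mul (zero_at_infty f).norm
      simpa using h1.div_const δ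
  set h : C₀(Ω, 𝕜) := ⟨⟨fun x => g x * (starRingEnd 𝕜) (f x) / ((‖f x‖ ^ 2 + δ : ℝ) : 𝕜),
    hcont⟩, hzero⟩ with hh
  have happ : ∀ x : Ω, h x = g x * (starRingEnd 𝕜) (f x) / ((‖f x‖ ^ 2 + δ : ℝ) : 𝕜) :=
    fun x => rfl
  -- ‖h‖ ≤ 1
  have hnorm1 : ‖h‖ ≤ 1 := by
    rw [← ZeroAtInftyContinuousMap.norm_toBCF_eq_norm]
    refine (BoundedContinuousFunction.norm_le zero_le_one).mpr fun x => ?_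
    have hd : (0:ℝ) < ‖f x‖ ^ 2 + δ := by positivity
    show ‖h x‖ ≤ 1
    rw [happ, norm_div, norm_mul, RCLike.norm_conj, RCLike.norm_ofReal, abs_of_pos hd,
      div_le_one hd]
    nlinarith [hfg x, norm_nonneg (f x), norm_nonneg (g x)]
  -- ‖h * f - g‖ ≤ √δ / 2
  have hdiff : ‖h * f - g‖ ≤ Real.sqrt δ / 2 := by
    rw [← ZeroAtInftyContinuousMap.norm_toBCF_eq_norm]
    refine (BoundedContinuousFunction.norm_le (by positivity)).mpr fun x => ?_
    show ‖(h * f - g) x‖ ≤ Real.sqrt δ / 2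
    have hval : (h * f - g) x = h x * f x - g x := rfl
    rw [hval, happ, aux_id (f x) (g x) δ hδ]
    have hd : (0:ℝ) < ‖f x‖ ^ 2 + δ := by positivity
    rw [norm_neg, norm_div, norm_mul, RCLike.norm_ofReal, RCLike.norm_ofReal,
      abs_of_pos hδ, abs_of_pos hd]
    exact aux_ineq _ _ _ (norm_nonneg _) (hfg x) hδ
  -- assemble
  have hsplit : M.smul g s = M.smul (g - h * f) s + M.smul h (M.smul f s) := by
    rw [← M.mul_smul]
    have : g = (g - h * f) + h * f := by abel
    conv_lhs => rw [this]
    rw [map_add, ContinuousLinearMap.add_apply]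
  calc ‖M.smul g s‖ ≤ ‖M.smul (g - h * f) s‖ + ‖M.smul h (M.smul f s)‖ := by
        rw [hsplit]; exact norm_add_le _ _
    _ ≤ ‖g - h * f‖ * ‖s‖ + ‖h‖ * ‖M.smul f s‖ :=
        add_le_add (M.norm_smul_le _ _) (M.norm_smul_le _ _)
    _ ≤ (Real.sqrt δ / 2) * ‖s‖ + 1 * ‖M.smul f s‖ := by
        refine add_le_add (mul_le_mul_of_nonneg_right ?_ (norm_nonneg s))
          (mul_le_mul_of_nonneg_right hnorm1 (norm_nonneg _))
        rw [← norm_neg]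
        simpa [neg_sub] using hdiff
    _ ≤ ‖M.smul f s‖ + ε := by
        rw [one_mul, add_comm]
        refine add_le_add le_rfl ?_
        have hsqrt : Real.sqrt δ = c := by rw [hδdef, Real.sqrt_sq hcpos.le]
        rw [hsqrt, hc]
        rw [div_div, div_mul_eq_mul_div, div_le_iff₀ (by positivity)]
        nlinarith [norm_nonneg s, hε.le]
  
end
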